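/- For every integer k ≥ 3, the graph obtained from a cycle of length k by adding two vertices adjacent to each other and to every vertex on the cycle is a minor of B_{2k}, the graph obtained from the alternating double wheel A_{2k} by adding an edge joining its two hubs. -/

import Mathlib

/-- `G` is a minor of `H`: `G` can be obtained from a subgraph of `H` by contracting
edges. Equivalently (for finite graphs, as formalized here), there is a family of
pairwise disjoint nonempty connected "branch sets" in `H`, one for each vertex of `G`,
such that adjacent vertices of `G` have branch sets joined by an edge of `H`. -/
def IsMinor {α β : Type*} (G : SimpleGraph α) (H : SimpleGraph β) : Prop :=
  ∃ φ : α → Set β,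
    (∀ a, (φ a).Nonempty) ∧
    (∀ a, (H.induce (φ a)).Connected) ∧
    (Pairwise (Function.onFun Disjoint φ)) ∧
    (∀ a b, G.Adj a b → ∃ x ∈ φ a, ∃ y ∈ φ b, H.Adj x y)

/-- `B_m`: the `2m`-spoke alternating double wheel `A_m` together with an edge joining
its two hubs. Rim vertices `Sum.inl i` (`i : Fin (2m)`, representing `v_{i+1}`) form a
cycle; hub `Sum.inr 0` (= `v_0`) is joined to the rim vertices with odd subscript, hub
`Sum.inr 1` (= `v_0'`) to those with even subscript, and the two hubs are adjacent. -/
def doubleWheelPlus (m : ℕ) : SimpleGraph (Fin (2 * m) ⊕ Fin 2) :=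
  SimpleGraph.fromRel (fun a b =>
    match a, b with
    | Sum.inl i, Sum.inl j => (j : ℕ) = ((i : ℕ) + 1) % (2 * m)
    | Sum.inl i, Sum.inr h => (h = 0 ∧ (i : ℕ) % 2 = 0) ∨ (h = 1 ∧ (i : ℕ) % 2 = 1)
    | Sum.inr h, Sum.inr h' => h ≠ h'
    | _, _ => False)

/-- The graph obtained from a cycle of length `k` by adding two vertices adjacent to
each other and to every vertex of the cycle. -/
def cyclePlusTwo (k : ℕ) : SimpleGraph (Fin k ⊕ Fin 2) :=
  SimpleGraph.fromRel (fun a b =>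
    match a, b with
    | Sum.inl i, Sum.inl j => (j : ℕ) = ((i : ℕ) + 1) % k
    | Sum.inl _, Sum.inr _ => True
    | Sum.inr h, Sum.inr h' => h ≠ h'
    | _, _ => False)

/-!
The rim of `B_{2k}` is a cycle of length `4k`. Cut it into `k` consecutive blocks of four
rim vertices and contract each block: the blocks form a `k`-cycle, every block contains rim
vertices of both parities and is therefore joined to both hubs, and the hub edge is kept.
-/

open SimpleGraph

section Minors

variable {α β : Type*} {G : SimpleGraph α} {H : SimpleGraph β}

theorem isMinor_of_connected_fibers (f : β → α)
    (hconn : ∀ a, (H.induce (f ⁻¹' {a})).Connected)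
    (hlift : ∀ a b, G.Adj a b → ∃ x y, f x = a ∧ f y = b ∧ H.Adj x y) :
    IsMinor G H := by
  refine ⟨fun a => f ⁻¹' {a}, fun a => ?_, hconn, fun a b hab => ?_, fun a b hab => ?_⟩
  · obtain ⟨⟨x, hx⟩⟩ := (hconn a).nonempty
    exact ⟨x, hx⟩
  · exact Set.disjoint_left.2 fun x hxa hxb => hab (hxa.symm.trans hxb)
  · obtain ⟨x, y, rfl, rfl, hxy⟩ := hlift a b hab
    exact ⟨x, rfl, y, rfl, hxy⟩

theorem isMinor_fromRel_of_connected_fibers {r : α → α → Prop} (f : β → α)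
    (hconn : ∀ a, (H.induce (f ⁻¹' {a})).Connected)
    (hlift : ∀ a b, a ≠ b → r a b → ∃ x y, f x = a ∧ f y = b ∧ H.Adj x y) :
    IsMinor (SimpleGraph.fromRel r) H := by
  refine isMinor_of_connected_fibers f hconn fun a b hab => ?_
  obtain ⟨hne, hab | hba⟩ := (fromRel_adj r a b).1 hab
  · exact hlift a b hne hab
  · obtain ⟨y, x, hy, hx, hyx⟩ := hlift b a hne.symm hba
    exact ⟨x, y, hx, hy, hyx.symm⟩

end Minors

theorem SimpleGraph.connected_induce_range_of_adj_succ {V : Type*} {G : SimpleGraph V} {n : ℕ}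
    (f : Fin (n + 1) → V) (hf : ∀ r : Fin n, G.Adj (f r.castSucc) (f r.succ)) :
    (G.induce (Set.range f)).Connected := by
  refine (connected_iff_exists_forall_reachable _).2 ⟨⟨f 0, 0, rfl⟩, ?_⟩
  rintro ⟨_, r, rfl⟩
  induction r using Fin.induction with
  | zero => rfl
  | succ r ih => exact ih.trans (Adj.reachable (G := G.induce (Set.range f)) (hf r))

theorem SimpleGraph.connected_induce_singleton {V : Type*} (G : SimpleGraph V) (v : V) :
    (G.induce {v}).Connected := by
  rw [induce_singleton_eq_top]
  exact connected_top

section DoubleWheel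

variable {m : ℕ}

theorem doubleWheelPlus_adj_inl_inl {x y : Fin (2 * m)} (h : (y : ℕ) = (x + 1) % (2 * m)) :
    (doubleWheelPlus m).Adj (.inl x) (.inl y) := by
  have hx := x.isLt
  refine (fromRel_adj _ _ _).2 ⟨fun hxy => ?_, Or.inl h⟩
  rw [← Sum.inl.inj hxy] at h
  rcases Nat.lt_or_ge (x + 1) (2 * m) with hlt | hge
  · rw [Nat.mod_eq_of_lt hlt] at h; omega
  · rw [show (x : ℕ) + 1 = 2 * m by omega, Nat.mod_self] at h; omega

theorem doubleWheelPlus_adj_inl_inr {x : Fin (2 * m)} {h : Fin 2} (hx : (x : ℕ) % 2 = h) :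
    (doubleWheelPlus m).Adj (.inl x) (.inr h) := by
  refine (fromRel_adj _ _ _).2 ⟨Sum.inl_ne_inr, Or.inl ?_⟩
  fin_cases h
  · exact Or.inl ⟨rfl, hx⟩
  · exact Or.inr ⟨rfl, hx⟩

theorem doubleWheelPlus_adj_inr_inr {h h' : Fin 2} (hne : h ≠ h') :
    (doubleWheelPlus m).Adj (.inr h) (.inr h') :=
  (fromRel_adj _ _ _).2 ⟨fun e => hne (Sum.inr.inj e), Or.inl hne⟩

end DoubleWheel

def blockVertex (k : ℕ) (i : Fin k) (r : Fin 4) : Fin (2 * (2 * k)) :=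
  ⟨4 * i + r, by omega⟩

def blockIndex (k : ℕ) (x : Fin (2 * (2 * k))) : Fin k :=
  ⟨x / 4, by omega⟩

def contractBlocks (k : ℕ) : Fin (2 * (2 * k)) ⊕ Fin 2 → Fin k ⊕ Fin 2 :=
  Sum.map (blockIndex k) id

section Blocks

variable {k : ℕ}

theorem contractBlocks_inl_blockVertex (i : Fin k) (r : Fin 4) :
    contractBlocks k (.inl (blockVertex k i r)) = .inl i :=
  congrArg Sum.inl (Fin.ext (by simp only [blockIndex, blockVertex]; omega))

theorem preimage_contractBlocks_inl (i : Fin k) :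
    contractBlocks k ⁻¹' {.inl i} = Set.range fun r => .inl (blockVertex k i r) := by
  ext (x | h)
  · simp only [Set.mem_preimage, Set.mem_singleton_iff, Set.mem_range, Sum.inl.injEq]
    constructor
    · intro hx
      have hi : (x : ℕ) / 4 = i := by
        simpa [contractBlocks, blockIndex, Fin.ext_iff] using hx
      exact ⟨⟨x % 4, by omega⟩, Fin.ext (by simp only [blockVertex]; omega)⟩
    · rintro ⟨r, rfl⟩
      exact contractBlocks_inl_blockVertex i r
  · simp [contractBlocks]

theorem preimage_contractBlocks_inr (h : Fin 2) :
    contractBlocks k ⁻¹' {.inr h} = {.inr h} := by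
  ext (x | h') <;> simp [contractBlocks]

theorem doubleWheelPlus_adj_blockVertex_succ (i : Fin k) (r : Fin 3) :
    (doubleWheelPlus (2 * k)).Adj (.inl (blockVertex k i r.castSucc))
      (.inl (blockVertex k i r.succ)) := by
  apply doubleWheelPlus_adj_inl_inl
  simp only [blockVertex, Fin.val_castSucc, Fin.val_succ]
  rw [Nat.mod_eq_of_lt (by omega)]
  omega

theorem doubleWheelPlus_adj_blockVertex_three_zero {i j : Fin k} (hij : (j : ℕ) = (i + 1) % k) :
    (doubleWheelPlus (2 * k)).Adj (.inl (blockVertex k i 3)) (.inl (blockVertex k j 0)) := by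
  apply doubleWheelPlus_adj_inl_inl
  change 4 * (j : ℕ) + 0 = (4 * i + 3 + 1) % (2 * (2 * k))
  rw [hij, show 4 * (i : ℕ) + 3 + 1 = 4 * (i + 1) by ring, show 2 * (2 * k) = 4 * k by ring,
    Nat.mul_mod_mul_left, Nat.add_zero]

theorem connected_induce_preimage_contractBlocks (a : Fin k ⊕ Fin 2) :
    ((doubleWheelPlus (2 * k)).induce (contractBlocks k ⁻¹' {a})).Connected := by
  rcases a with i | h
  · rw [preimage_contractBlocks_inl]
    exact connected_induce_range_of_adj_succ _ (doubleWheelPlus_adj_blockVertex_succ i)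
  · rw [preimage_contractBlocks_inr]
    exact connected_induce_singleton _ _

end Blocks

theorem stmt_9_general (k : ℕ) :
    IsMinor (cyclePlusTwo k) (doubleWheelPlus (2 * k)) := by
  refine isMinor_fromRel_of_connected_fibers (contractBlocks k)
    connected_induce_preimage_contractBlocks ?_
  rintro (i | h) (j | h') - hr
  · exact ⟨_, _, contractBlocks_inl_blockVertex i 3, contractBlocks_inl_blockVertex j 0,
      doubleWheelPlus_adj_blockVertex_three_zero hr⟩
  · -- rim vertex `4 i + h` of block `i` has the parity that hub `h` sees
    exact ⟨_, .inr h', contractBlocks_inl_blockVertex i (Fin.castAdd 2 h'), rfl,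
      doubleWheelPlus_adj_inl_inr (by simp [blockVertex]; omega)⟩
  · exact hr.elim
  · exact ⟨.inr h, .inr h', rfl, rfl, doubleWheelPlus_adj_inr_inr hr⟩

/-- for every `k ≥ 3`, the graph obtained from a cycle of length `k` by
adding two mutually adjacent vertices joined to all cycle vertices is a minor of
`B_{2k}`. -/
theorem stmt_9 (k : ℕ) (hk : 3 ≤ k) :
    IsMinor (cyclePlusTwo k) (doubleWheelPlus (2 * k)) :=
  stmt_9_general k
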